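/- arXiv:2306.14488 — 2 statements merged into one kernel-verified Lean document; each statement's English description precedes it below -/
import Mathlib

section
/- Let D12, D13, D23 be positive real numbers and let ξ1, ξ2, ξ3 be positive real numbers with ξ1 + ξ2 + ξ3 = 1. Then for every pair of real numbers g1, g2 there exists a unique triple (N1, N2, N3) ∈ ℝ³ with N1 + N2 + N3 = 0 satisfying the Maxwell–Stefan flux relations (ξ2·N1 − ξ1·N2)/D12 + (ξ3·N1 − ξ1·N3)/D13 = g1 and (ξ1·N2 − ξ2·N1)/D12 + (ξ3·N2 − ξ2·N3)/D23 = g2. -/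
/-- Existence and uniqueness of the Maxwell–Stefan fluxes for a three-component
mixture: given positive binary diffusivities `D12, D13, D23`, positive mole
fractions `ξ1, ξ2, ξ3` summing to one, and right-hand sides `g1, g2`
(the negative gradients), there is a unique triple `(N1, N2, N3)` with
`N1 + N2 + N3 = 0` satisfying the two Maxwell–Stefan flux relations. -/
theorem maxwell_stefan_flux_existsUnique
    (D12 D13 D23 : ℝ) (hD12 : 0 < D12) (hD13 : 0 < D13) (hD23 : 0 < D23)
    (ξ1 ξ2 ξ3 : ℝ) (hξ1 : 0 < ξ1) (hξ2 : 0 < ξ2) (hξ3 : 0 < ξ3)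
    (hsum : ξ1 + ξ2 + ξ3 = 1) (g1 g2 : ℝ) :
    ∃! N : ℝ × ℝ × ℝ,
      N.1 + N.2.1 + N.2.2 = 0 ∧
      (ξ2 * N.1 - ξ1 * N.2.1) / D12 + (ξ3 * N.1 - ξ1 * N.2.2) / D13 = g1 ∧
      (ξ1 * N.2.1 - ξ2 * N.1) / D12 + (ξ3 * N.2.1 - ξ2 * N.2.2) / D23 = g2 := by
  have h12 := hD12.ne'
  have h13 := hD13.ne'
  have h23 := hD23.ne'
  have hΔ : 0 < ξ2*D13 + ξ1*D23 + ξ3*D12 := by positivity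
  have hΔ' := hΔ.ne'
  have h3 : ξ3 = 1 - ξ1 - ξ2 := by linarith
  subst h3
  set Δ := ξ2*D13 + ξ1*D23 + (1 - ξ1 - ξ2)*D12 with hΔdef
  set n1 : ℝ := ((ξ1*D23 + (1-ξ1)*D12)*g1*D13 - ξ1*(D12-D13)*g2*D23)/Δ with hn1
  set n2 : ℝ := ((ξ2*D13 + (1-ξ2)*D12)*g2*D23 - ξ2*(D12-D23)*g1*D13)/Δ with hn2
  refine ⟨(n1, n2, -n1-n2), ⟨by ring, ?_, ?_⟩, ?_⟩
  · rw [hn1, hn2, div_add_div _ _ h12 h13, div_eq_iff (by positivity)]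
    field_simp
    ring
  · rw [hn1, hn2, div_add_div _ _ h12 h23, div_eq_iff (by positivity)]
    field_simp
    ring
  · rintro ⟨x, y, z⟩ ⟨h0, h1, h2⟩
    have hz : z = -x - y := by linarith
    subst hz
    simp only at h1 h2
    rw [div_add_div _ _ h12 h13, div_eq_iff (by positivity)] at h1
    rw [div_add_div _ _ h12 h23, div_eq_iff (by positivity)] at h2
    have hx : x = n1 := by
      rw [hn1, eq_div_iff hΔ']
      refine mul_right_cancel₀ h12 ?_
      linear_combination (ξ1*D23 + (1-ξ1)*D12) * h1 - (ξ1*(D12-D13)) * h2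
    have hy : y = n2 := by
      rw [hn2, eq_div_iff hΔ']
      refine mul_right_cancel₀ h12 ?_
      linear_combination (ξ2*D13 + (1-ξ2)*D12) * h2 - (ξ2*(D12-D23)) * h1
    simp [hx, hy]
end

section
/- Let D12, D13, D23 be positive real numbers and let ξ1, ξ2, ξ3 be positive real numbers with ξ1 + ξ2 + ξ3 = 1. Substituting N3 = −(N1 + N2) into the Maxwell–Stefan flux relations yields the 2×2 linear system M·(N1, N2)ᵀ = (g1, g2)ᵀ with M11 = ξ2/D12 + (ξ1 + ξ3)/D13, M12 = −ξ1/D12 + ξ1/D13, M21 = −ξ2/D12 + ξ2/D23, M22 = ξ1/D12 + (ξ2 + ξ3)/D23; the determinant of M is strictly positive, i.e. M11·M22 − M12·M21 > 0. -/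
/-- Eliminating `N3 = -(N1 + N2)` from the Maxwell–Stefan flux relations for a
three-component mixture yields the 2×2 linear system `M · (N1, N2)ᵀ = (g1, g2)ᵀ`
with `M11 = ξ2/D12 + (ξ1 + ξ3)/D13`, `M12 = -ξ1/D12 + ξ1/D13`,
`M21 = -ξ2/D12 + ξ2/D23`, `M22 = ξ1/D12 + (ξ2 + ξ3)/D23`, and the determinant
of `M` is strictly positive. -/
theorem maxwell_stefan_reduced_system_det_pos
    (D12 D13 D23 : ℝ) (hD12 : 0 < D12) (hD13 : 0 < D13) (hD23 : 0 < D23)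
    (ξ1 ξ2 ξ3 : ℝ) (hξ1 : 0 < ξ1) (hξ2 : 0 < ξ2) (hξ3 : 0 < ξ3)
    (hsum : ξ1 + ξ2 + ξ3 = 1) :
    (∀ N1 N2 g1 g2 : ℝ,
      ((ξ2 * N1 - ξ1 * N2) / D12 + (ξ3 * N1 - ξ1 * (-(N1 + N2))) / D13 = g1 ∧
       (ξ1 * N2 - ξ2 * N1) / D12 + (ξ3 * N2 - ξ2 * (-(N1 + N2))) / D23 = g2) ↔
      ((ξ2 / D12 + (ξ1 + ξ3) / D13) * N1 + (-ξ1 / D12 + ξ1 / D13) * N2 = g1 ∧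
       (-ξ2 / D12 + ξ2 / D23) * N1 + (ξ1 / D12 + (ξ2 + ξ3) / D23) * N2 = g2)) ∧
    (ξ2 / D12 + (ξ1 + ξ3) / D13) * (ξ1 / D12 + (ξ2 + ξ3) / D23) -
      (-ξ1 / D12 + ξ1 / D13) * (-ξ2 / D12 + ξ2 / D23) > 0 := by
  constructor
  · intro N1 N2 g1 g2
    have h1 : (ξ2 * N1 - ξ1 * N2) / D12 + (ξ3 * N1 - ξ1 * (-(N1 + N2))) / D13 =
        (ξ2 / D12 + (ξ1 + ξ3) / D13) * N1 + (-ξ1 / D12 + ξ1 / D13) * N2 := by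
      field_simp; ring
    have h2 : (ξ1 * N2 - ξ2 * N1) / D12 + (ξ3 * N2 - ξ2 * (-(N1 + N2))) / D23 =
        (-ξ2 / D12 + ξ2 / D23) * N1 + (ξ1 / D12 + (ξ2 + ξ3) / D23) * N2 := by
      field_simp; ring
    rw [h1, h2]
  · have key : (ξ2 / D12 + (ξ1 + ξ3) / D13) * (ξ1 / D12 + (ξ2 + ξ3) / D23) -
        (-ξ1 / D12 + ξ1 / D13) * (-ξ2 / D12 + ξ2 / D23) =
        ξ1 / (D12 * D13) + ξ2 / (D12 * D23) + ξ3 / (D13 * D23) := by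
      have h3 : ξ3 = 1 - ξ1 - ξ2 := by linarith
      subst h3
      field_simp
      ring
    rw [key]
    positivity
end
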